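/- arXiv:1208.1936 — 2 statements merged into one kernel-verified Lean document; each statement's English description precedes it below -/
import Mathlib

section
/- Let Γ be a finite-index subgroup of SL(2,ℤ) with Wohlfahrt level l. Then for every positive integer m one has e_{Γ,lm} = e_{Γ,l} and consequently f_{Γ,lm} = f_{Γ,l}. -/
/-- `SL(2, ℤ)`. -/
abbrev SL2Z := Matrix.SpecialLinearGroup (Fin 2) ℤ

/-- The entrywise reduction homomorphism `p_m : SL(2,ℤ) → SL(2, ℤ/mℤ)`. -/
def redMap (m : ℕ) : SL2Z →* Matrix.SpecialLinearGroup (Fin 2) (ZMod m) :=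
  Matrix.SpecialLinearGroup.map (Int.castRingHom (ZMod m))

/-- The Wohlfahrt level of `Γ`: the least positive integer `l` such that
`A * T ^ l * A⁻¹ ∈ Γ` for all `A ∈ SL(2,ℤ)`, where `T = [[1,1],[0,1]]`. -/
noncomputable def wohlfahrtLevel (Γ : Subgroup SL2Z) : ℕ :=
  sInf {l : ℕ | 0 < l ∧ ∀ A : SL2Z, A * ModularGroup.T ^ l * A⁻¹ ∈ Γ}

lemma exists_add_mul_isCoprime (a b c : ℤ) (hc : c ≠ 0)
    (h : ∃ x y z : ℤ, a * x + b * y + c * z = 1) :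
    ∃ k : ℤ, IsCoprime (a + b * k) c := by
  classical
  set K : ℕ := (c.natAbs.primeFactors.filter (fun p : ℕ => ¬ (p : ℤ) ∣ a)).prod id with hK
  refine ⟨(K : ℤ), ?_⟩
  rw [Int.isCoprime_iff_gcd_eq_one]
  by_contra hg
  obtain ⟨p, hp, hpdvd⟩ := Nat.exists_prime_and_dvd hg
  have hpc : (p : ℤ) ∣ c := (Int.natCast_dvd_natCast.mpr hpdvd).trans (Int.gcd_dvd_right _ _)
  have hpak : (p : ℤ) ∣ a + b * K := (Int.natCast_dvd_natCast.mpr hpdvd).trans (Int.gcd_dvd_left _ _)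
  have hppr : Prime (p : ℤ) := Nat.prime_iff_prime_int.mp hp
  obtain ⟨x, y, z, hxyz⟩ := h
  by_cases hpa : (p : ℤ) ∣ a
  · have hpb : ¬ (p : ℤ) ∣ b := by
      intro hpb
      have h1 : (p : ℤ) ∣ 1 := by
        rw [← hxyz]
        exact dvd_add (dvd_add (hpa.mul_right x) (hpb.mul_right y)) (hpc.mul_right z)
      exact hp.one_lt.ne' (Nat.dvd_one.mp (by exact_mod_cast h1))
    have hpK : ¬ (p : ℕ) ∣ K := by
      intro hpK
      obtain ⟨q, hq, hpq⟩ := (Nat.Prime.prime hp).exists_mem_finset_dvd hpK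
      have hq' := Finset.mem_filter.mp hq
      have : p = q := (Nat.prime_dvd_prime_iff_eq hp (Nat.prime_of_mem_primeFactors hq'.1)).mp hpq
      exact hq'.2 (this ▸ hpa)
    have h2 : (p : ℤ) ∣ b * K := (dvd_add_right hpa).mp hpak
    rcases hppr.dvd_mul.mp h2 with h1 | h1
    · exact hpb h1
    · exact hpK (Int.natCast_dvd_natCast.mp (by exact_mod_cast h1))
  · have hpK : (p : ℕ) ∣ K := by
      have hmem : p ∈ c.natAbs.primeFactors.filter (fun p : ℕ => ¬ (p : ℤ) ∣ a) :=
        Finset.mem_filter.mpr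
          ⟨Nat.mem_primeFactors.mpr ⟨hp, Int.natCast_dvd.mp hpc, Int.natAbs_ne_zero.mpr hc⟩, hpa⟩
      have := Finset.dvd_prod_of_mem (id : ℕ → ℕ) hmem
      simpa [hK] using this
    have hpbk : (p : ℤ) ∣ b * K := Dvd.dvd.mul_left (Int.natCast_dvd_natCast.mpr hpK) b
    have : (p : ℤ) ∣ a := by
      have h3 := dvd_sub hpak hpbk
      simpa using h3
    exact hpa this

lemma exists_isUnit_add_mul (n : ℕ) [NeZero n] (a b : ZMod n)
    (h : ∃ u v : ZMod n, a * u + b * v = 1) :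
    ∃ s : ZMod n, IsUnit (a + b * s) := by
  obtain ⟨u, v, huv⟩ := h
  have hn : (n : ℤ) ≠ 0 := by exact_mod_cast NeZero.ne n
  have h0 : (((a.val : ℤ) * u.val + (b.val : ℤ) * v.val - 1 : ℤ) : ZMod n) = 0 := by
    push_cast
    simp only [ZMod.natCast_val, ZMod.cast_id]
    rw [huv]; ring
  obtain ⟨z, hzz⟩ := (ZMod.intCast_zmod_eq_zero_iff_dvd _ n).mp h0
  obtain ⟨k, hk⟩ := exists_add_mul_isCoprime (a.val : ℤ) (b.val : ℤ) n hn
    ⟨(u.val : ℤ), (v.val : ℤ), -z, by linarith⟩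
  obtain ⟨x, y, hxy⟩ := hk
  refine ⟨(k : ZMod n), IsUnit.of_mul_eq_one ((x : ZMod n)) ?_⟩
  have : (((x * ((a.val : ℤ) + (b.val : ℤ) * k) + y * n : ℤ)) : ZMod n) = ((1 : ℤ) : ZMod n) := by
    rw [hxy]
  push_cast at this
  simp only [ZMod.natCast_val, ZMod.cast_id, ZMod.natCast_self, mul_zero, add_zero] at this
  rw [← this]; ring

lemma redMap_apply (N : ℕ) (γ : SL2Z) (i j : Fin 2) :
    (redMap N γ) i j = ((γ i j : ℤ) : ZMod N) := rfl

lemma intCast_val_cast (n : ℕ) [NeZero n] (x : ZMod n) : ((x.val : ℤ) : ZMod n) = x := by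
  push_cast
  simp [ZMod.natCast_val, ZMod.cast_id]

lemma redMap_surjective (n : ℕ) [NeZero n] : Function.Surjective (redMap n) := by
  intro M
  set aa := M.1 0 0 with haa
  set bb := M.1 0 1 with hbb
  set cc := M.1 1 0 with hcc
  set dd := M.1 1 1 with hdd
  have hdet : aa * dd - bb * cc = 1 := by
    have := M.2
    rw [Matrix.det_fin_two] at this
    rw [haa, hbb, hcc, hdd]; exact this
  set a : ℤ := (aa.val : ℤ) with ha
  set b : ℤ := (bb.val : ℤ) with hb
  set c : ℤ := (cc.val : ℤ) with hc
  set d : ℤ := (dd.val : ℤ) with hd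
  have hcasta : ((a : ℤ) : ZMod n) = aa := intCast_val_cast n aa
  have hcastb : ((b : ℤ) : ZMod n) = bb := intCast_val_cast n bb
  have hcastc : ((c : ℤ) : ZMod n) = cc := intCast_val_cast n cc
  have hcastd : ((d : ℤ) : ZMod n) = dd := intCast_val_cast n dd
  have hdvd : (n : ℤ) ∣ a * d - b * c - 1 := by
    rw [← ZMod.intCast_zmod_eq_zero_iff_dvd]
    push_cast
    rw [hcasta, hcastb, hcastc, hcastd]
    rw [sub_eq_zero]
    exact_mod_cast hdet
  obtain ⟨w, hw⟩ := hdvd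
  obtain ⟨c', hc'0, hc'mod, hbez⟩ :
      ∃ c' : ℤ, c' ≠ 0 ∧ ((c' : ZMod n) = cc) ∧ ∃ x y z, d * x + (n : ℤ) * y + c' * z = 1 := by
    by_cases hc0 : c = 0
    · refine ⟨(n : ℤ), by exact_mod_cast NeZero.ne n, by simp [← hcastc, hc0], a, -w, 0, ?_⟩
      rw [hc0] at hw; push_cast; linarith
    · exact ⟨c, hc0, hcastc, a, -w, -b, by linarith⟩
  obtain ⟨k, hk⟩ := exists_add_mul_isCoprime d (n : ℤ) c' hc'0 hbez
  set d' : ℤ := d + (n : ℤ) * k with hd'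
  obtain ⟨p, q, hpq⟩ := hk
  -- p * d' + q * c' = 1
  have hcastd' : ((d' : ℤ) : ZMod n) = dd := by
    rw [hd']; push_cast; simp [hcastd]
  set Δa : ℤ := a - p with hΔa
  set Δb : ℤ := b + q with hΔb
  have hrel : (n : ℤ) ∣ Δa * d' - Δb * c' := by
    rw [← ZMod.intCast_zmod_eq_zero_iff_dvd]
    push_cast
    rw [hcastd', hc'mod]
    have h1 : ((Δa : ℤ) : ZMod n) = aa - ((p : ℤ) : ZMod n) := by rw [hΔa]; push_cast; rw [hcasta]
    have h2 : ((Δb : ℤ) : ZMod n) = bb + ((q : ℤ) : ZMod n) := by rw [hΔb]; push_cast; rw [hcastb]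
    push_cast at h1 h2
    rw [h1, h2]
    have hpq' : ((p : ℤ) : ZMod n) * dd + ((q : ℤ) : ZMod n) * cc = 1 := by
      have : (((p * d' + q * c' : ℤ)) : ZMod n) = 1 := by rw [hpq]; simp
      push_cast at this
      rw [hcastd', hc'mod] at this
      exact this
    have : (aa - (p:ZMod n)) * dd - (bb + (q:ZMod n)) * cc
        = (aa * dd - bb * cc) - ((p:ZMod n) * dd + (q:ZMod n) * cc) := by ring
    rw [this, hdet, hpq', sub_self]
  obtain ⟨w2, hw2⟩ := hrel
  set t : ℤ := q * Δa + p * Δb with ht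
  have htc : t * c' - Δa = -(p * ((n:ℤ) * w2)) := by
    have : t * c' - Δa * (p * d' + q * c') = -(p * (Δa * d' - Δb * c')) := by rw [ht]; ring
    rw [hpq, mul_one, hw2] at this
    linarith
  have htd : t * d' - Δb = q * ((n:ℤ) * w2) := by
    have : t * d' - Δb * (p * d' + q * c') = q * (Δa * d' - Δb * c') := by rw [ht]; ring
    rw [hpq, mul_one, hw2] at this
    linarith
  refine ⟨⟨!![p + t * c', -q + t * d'; c', d'], by rw [Matrix.det_fin_two_of]; linarith [hpq]⟩, ?_⟩
  have e00 : ((p + t * c' : ℤ) : ZMod n) = aa := by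
    have : p + t * c' = a - p * ((n:ℤ) * w2) := by rw [hΔa] at htc; linarith
    rw [this]; push_cast; rw [hcasta]; ring_nf; simp
  have e01 : ((-q + t * d' : ℤ) : ZMod n) = bb := by
    have : -q + t * d' = b + q * ((n:ℤ) * w2) := by rw [hΔb] at htd; linarith
    rw [this]; push_cast; rw [hcastb]; ring_nf; simp
  apply Matrix.SpecialLinearGroup.ext
  intro i j
  fin_cases i <;> fin_cases j
  · exact e00
  · exact e01
  · exact hc'mod
  · exact hcastd'

section Elem
variable {R : Type*} [CommRing R]

/-- upper elementary matrix in `SL₂`. -/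
def E12 (x : R) : Matrix.SpecialLinearGroup (Fin 2) R :=
  ⟨!![1, x; 0, 1], by simp [Matrix.det_fin_two_of]⟩

/-- lower elementary matrix in `SL₂`. -/
def E21 (x : R) : Matrix.SpecialLinearGroup (Fin 2) R :=
  ⟨!![1, 0; x, 1], by simp [Matrix.det_fin_two_of]⟩

@[simp] lemma E12_coe (x : R) :
    ((E12 x : Matrix.SpecialLinearGroup (Fin 2) R) : Matrix (Fin 2) (Fin 2) R) = !![1, x; 0, 1] := rfl

@[simp] lemma E21_coe (x : R) :
    ((E21 x : Matrix.SpecialLinearGroup (Fin 2) R) : Matrix (Fin 2) (Fin 2) R) = !![1, 0; x, 1] := rfl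

lemma E12_mul (x y : R) : E12 x * E12 y = E12 (x + y) := by
  apply Subtype.ext
  rw [Matrix.SpecialLinearGroup.coe_mul, E12_coe, E12_coe, E12_coe, Matrix.mul_fin_two]
  apply Matrix.ext
  intro i j
  fin_cases i <;> fin_cases j <;> simp <;> ring

lemma E21_mul (x y : R) : E21 x * E21 y = E21 (x + y) := by
  apply Subtype.ext
  rw [Matrix.SpecialLinearGroup.coe_mul, E21_coe, E21_coe, E21_coe, Matrix.mul_fin_two]
  apply Matrix.ext
  intro i j
  fin_cases i <;> fin_cases j <;> simp <;> ring

@[simp] lemma E12_zero : (E12 (0 : R)) = 1 := by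
  apply Matrix.SpecialLinearGroup.ext
  intro i j
  fin_cases i <;> fin_cases j <;> simp [E12]

@[simp] lemma E21_zero : (E21 (0 : R)) = 1 := by
  apply Matrix.SpecialLinearGroup.ext
  intro i j
  fin_cases i <;> fin_cases j <;> simp [E21]

lemma E12_inv (x : R) : (E12 x)⁻¹ = E12 (-x) := by
  apply inv_eq_of_mul_eq_one_right
  rw [E12_mul]; simp

lemma E21_inv (x : R) : (E21 x)⁻¹ = E21 (-x) := by
  apply inv_eq_of_mul_eq_one_right
  rw [E21_mul]; simp

lemma E12_pow (k : ℕ) : (E12 (1 : R)) ^ k = E12 (k : R) := by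
  induction k with
  | zero => simp
  | succ k ih => rw [pow_succ, ih, E12_mul]; push_cast; ring_nf

end Elem

lemma conj_pow_grp {G : Type*} [Group G] (a b : G) (k : ℕ) :
    (a * b * a⁻¹) ^ k = a * b ^ k * a⁻¹ := by
  induction k with
  | zero => simp
  | succ k ih => rw [pow_succ, ih, pow_succ]; group

lemma redMap_T (N : ℕ) : redMap N ModularGroup.T = E12 (1 : ZMod N) := by
  apply Matrix.SpecialLinearGroup.ext
  intro i j
  rw [redMap_apply]
  fin_cases i <;> fin_cases j <;> simp [ModularGroup.coe_T, E12]

lemma redMap_T_pow (N k : ℕ) : redMap N (ModularGroup.T ^ k) = E12 ((k : ZMod N)) := by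
  rw [map_pow, redMap_T, E12_pow]

def lowerT : SL2Z := ⟨!![1, 0; -1, 1], by simp [Matrix.det_fin_two_of]⟩

lemma STS_eq : ModularGroup.S * ModularGroup.T * ModularGroup.S⁻¹ = lowerT := by
  rw [mul_inv_eq_iff_eq_mul]
  apply Matrix.SpecialLinearGroup.ext
  intro i j
  simp only [Matrix.SpecialLinearGroup.coe_mul]
  fin_cases i <;> fin_cases j <;>
    simp [Matrix.SpecialLinearGroup.coe_mul, ModularGroup.coe_S, ModularGroup.coe_T, lowerT,
      Matrix.mul_fin_two]

lemma redMap_lowerT (N : ℕ) : redMap N lowerT = E21 (-1 : ZMod N) := by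
  apply Matrix.SpecialLinearGroup.ext
  intro i j
  rw [redMap_apply]
  fin_cases i <;> fin_cases j <;> simp [lowerT, E21]

lemma redMap_S_coe (N : ℕ) :
    ((redMap N ModularGroup.S : Matrix.SpecialLinearGroup (Fin 2) (ZMod N)) :
      Matrix (Fin 2) (Fin 2) (ZMod N)) = !![0, -1; 1, 0] := by
  apply Matrix.ext
  intro i j
  fin_cases i <;> fin_cases j <;> simp [redMap_apply, ModularGroup.coe_S]

lemma sigma_E12 (N : ℕ) (w : ZMod N) :
    redMap N ModularGroup.S * E12 w = E21 (-w) * redMap N ModularGroup.S := by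
  apply Subtype.ext
  rw [Matrix.SpecialLinearGroup.coe_mul, Matrix.SpecialLinearGroup.coe_mul, redMap_S_coe,
    E12_coe, E21_coe, Matrix.mul_fin_two, Matrix.mul_fin_two]
  apply Matrix.ext
  intro i j
  fin_cases i <;> fin_cases j <;> simp <;> ring

/-- The key computational identity for the elimination argument. -/
lemma matrix_key {R : Type*} [CommRing R] (a b c d w v : R)
    (hdet : a * d - b * c = 1) (hv : (a + b * w) * v = 1) :
    !![1, 0; -(c + d * w) * v, 1] * (!![a, b; c, d] * !![1, 0; w, 1]) * !![1, -(v * b); 0, 1] *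
      (!![1, 1; 0, 1] * !![1, 0; -1, 1] * !![1, 1; 0, 1]) =
    !![1, a + b * w; 0, 1] * !![1, 0; -v, 1] * !![1, a + b * w; 0, 1] := by
  rw [Matrix.mul_fin_two, Matrix.mul_fin_two, Matrix.mul_fin_two, Matrix.mul_fin_two,
    Matrix.mul_fin_two, Matrix.mul_fin_two, Matrix.mul_fin_two, Matrix.mul_fin_two]
  apply Matrix.ext
  intro i j
  fin_cases i <;> fin_cases j
  · simp
    linear_combination (b + 1) * hv
  · simp
    linear_combination (-(a + b*w)) * hv
  · simp
    linear_combination (d - (c + d*w)*v*b) * hv - v * hdet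
  · simp
    linear_combination (1 - c - d*w) * hv

lemma ker_le_map (Γ : Subgroup SL2Z) (l m : ℕ) (hl : 0 < l) (hm : 0 < m)
    (hT : ∀ A : SL2Z, A * ModularGroup.T ^ l * A⁻¹ ∈ Γ) :
    (Matrix.SpecialLinearGroup.map
        (ZMod.castHom (⟨m, rfl⟩ : l ∣ l * m) (ZMod l))).ker ≤ Γ.map (redMap (l * m)) := by
  haveI : NeZero l := ⟨hl.ne'⟩
  haveI : NeZero (l * m) := ⟨Nat.mul_ne_zero hl.ne' hm.ne'⟩
  set n := l * m with hn
  set H := Γ.map (redMap n) with hH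
  have hdvd : l ∣ n := ⟨m, rfl⟩
  -- kernel entry decompositions
  have hker0 : ∀ x : ZMod n, ZMod.castHom hdvd (ZMod l) x = 0 →
      ∃ y : ZMod n, x = (l : ZMod n) * y := by
    intro x hx
    have hxv : ((x.val : ℕ) : ZMod n) = x := by rw [ZMod.natCast_val, ZMod.cast_id]
    have h1 : ((x.val : ℕ) : ZMod l) = 0 := by
      have := map_natCast (ZMod.castHom hdvd (ZMod l)) x.val
      rw [hxv, hx] at this
      exact this.symm
    obtain ⟨yy, hyy⟩ := (ZMod.natCast_eq_zero_iff _ _).mp h1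
    refine ⟨(yy : ZMod n), ?_⟩
    rw [← hxv, hyy]
    push_cast
    ring
  have hker1 : ∀ x : ZMod n, ZMod.castHom hdvd (ZMod l) x = 1 →
      ∃ y : ZMod n, x = 1 + (l : ZMod n) * y := by
    intro x hx
    have h0 : ZMod.castHom hdvd (ZMod l) (x - 1) = 0 := by rw [map_sub, hx, map_one, sub_self]
    obtain ⟨y, hy⟩ := hker0 _ h0
    exact ⟨y, by rw [← hy]; ring⟩
  -- conjugation membership lemmas
  have hconjE12 : ∀ (P : SL2Z) (z : ZMod n),
      redMap n P * E12 ((l : ZMod n) * z) * (redMap n P)⁻¹ ∈ H := by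
    intro P z
    have hval : ((l * z.val : ℕ) : ZMod n) = (l : ZMod n) * z := by
      push_cast
      rw [ZMod.natCast_val, ZMod.cast_id]
    rw [← hval, ← redMap_T_pow n (l * z.val), ← map_inv, ← map_mul, ← map_mul]
    refine Subgroup.mem_map_of_mem _ ?_
    have hpow : P * ModularGroup.T ^ (l * z.val) * P⁻¹ =
        (P * ModularGroup.T ^ l * P⁻¹) ^ z.val := by
      rw [pow_mul, conj_pow_grp]
    rw [hpow]
    exact pow_mem (hT P) z.val
  have hconjE21 : ∀ (P : SL2Z) (z : ZMod n),
      redMap n P * E21 ((l : ZMod n) * z) * (redMap n P)⁻¹ ∈ H := by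
    intro P z
    have hσ : E21 ((l : ZMod n) * z) =
        redMap n ModularGroup.S * E12 ((l : ZMod n) * (-z)) * (redMap n ModularGroup.S)⁻¹ := by
      rw [show ((l : ZMod n) * (-z)) = -((l : ZMod n) * z) by ring, sigma_E12]
      group
    rw [hσ]
    have h2 := hconjE12 (P * ModularGroup.S) (-z)
    rw [map_mul, mul_inv_rev] at h2
    have h3 : redMap n P * (redMap n ModularGroup.S * E12 ((l : ZMod n) * (-z)) *
          (redMap n ModularGroup.S)⁻¹) * (redMap n P)⁻¹ =
        redMap n P * redMap n ModularGroup.S * E12 ((l : ZMod n) * (-z)) *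
          ((redMap n ModularGroup.S)⁻¹ * (redMap n P)⁻¹) := by group
    rw [h3]
    exact h2
  have hE12mem : ∀ z : ZMod n, E12 ((l : ZMod n) * z) ∈ H := by
    intro z
    have := hconjE12 1 z
    simpa using this
  have hE21mem : ∀ z : ZMod n, E21 ((l : ZMod n) * z) ∈ H := by
    intro z
    have := hconjE21 1 z
    simpa using this
  -- main argument
  intro g hg
  have hg1 : Matrix.SpecialLinearGroup.map (ZMod.castHom hdvd (ZMod l)) g = 1 :=
    MonoidHom.mem_ker.mp hg
  set gm : Matrix (Fin 2) (Fin 2) (ZMod n) := (g : Matrix (Fin 2) (Fin 2) (ZMod n)) with hgm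
  set a : ZMod n := gm 0 0 with ha
  set b : ZMod n := gm 0 1 with hb
  set c : ZMod n := gm 1 0 with hc
  set d : ZMod n := gm 1 1 with hd
  have hentry : ∀ i j, ZMod.castHom hdvd (ZMod l) (gm i j) =
      (1 : Matrix (Fin 2) (Fin 2) (ZMod l)) i j := by
    intro i j
    have h4 : ((Matrix.SpecialLinearGroup.map (ZMod.castHom hdvd (ZMod l)) g :
        Matrix.SpecialLinearGroup (Fin 2) (ZMod l)) : Matrix (Fin 2) (Fin 2) (ZMod l)) =
        (1 : Matrix (Fin 2) (Fin 2) (ZMod l)) := by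
      rw [hg1, Matrix.SpecialLinearGroup.coe_one]
    exact congrFun (congrFun h4 i) j
  have h00 : ZMod.castHom hdvd (ZMod l) a = 1 := by
    have := hentry 0 0; simpa [Matrix.one_apply] using this
  have h01 : ZMod.castHom hdvd (ZMod l) b = 0 := by
    have := hentry 0 1; simpa [Matrix.one_apply] using this
  have h10 : ZMod.castHom hdvd (ZMod l) c = 0 := by
    have := hentry 1 0; simpa [Matrix.one_apply] using this
  have h11 : ZMod.castHom hdvd (ZMod l) d = 1 := by
    have := hentry 1 1; simpa [Matrix.one_apply] using this
  obtain ⟨bh, hbh⟩ := hker0 b h01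
  obtain ⟨ch, hch⟩ := hker0 c h10
  have hdet : a * d - b * c = 1 := by
    have h5 := g.2
    rw [Matrix.det_fin_two] at h5
    exact h5
  -- find the unit
  obtain ⟨s, hu⟩ := exists_isUnit_add_mul n a (b * (l : ZMod n))
    ⟨d, -ch, by linear_combination hdet + b * hch⟩
  set w : ZMod n := (l : ZMod n) * s with hwdef
  have hu' : IsUnit (a + b * w) := by
    have : a + b * (l : ZMod n) * s = a + b * w := by rw [hwdef]; ring
    rwa [this] at hu
  obtain ⟨v₀, hv⟩ := hu'.exists_right_inv
  set u₀ : ZMod n := a + b * w with hu₀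
  set x : ZMod n := -(c + d * w) * v₀ with hx
  set y : ZMod n := -(v₀ * b) with hy
  -- the key SL₂ identity
  have hkey : E21 x * (g * E21 w) * E12 y * (E12 1 * E21 (-1) * E12 1) =
      E12 u₀ * E21 (-v₀) * E12 u₀ := by
    apply Subtype.ext
    push_cast [Matrix.SpecialLinearGroup.coe_mul, E12_coe, E21_coe]
    rw [show (g : Matrix (Fin 2) (Fin 2) (ZMod n)) = !![a, b; c, d] from Matrix.eta_fin_two _]
    exact matrix_key a b c d w v₀ hdet hv
  -- the diagonal part is in H
  have hcastl : ZMod.castHom hdvd (ZMod l) ((l : ZMod n)) = 0 := by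
    rw [map_natCast, ZMod.natCast_self]
  have hcastu₀ : ZMod.castHom hdvd (ZMod l) u₀ = 1 := by
    rw [hu₀, map_add, map_mul, h00, h01, zero_mul, add_zero]
  have hcastv₀ : ZMod.castHom hdvd (ZMod l) v₀ = 1 := by
    have h6 := congrArg (ZMod.castHom hdvd (ZMod l)) hv
    rw [map_mul, hcastu₀, one_mul, map_one] at h6
    exact h6
  obtain ⟨t, ht⟩ := hker1 u₀ hcastu₀
  obtain ⟨t', ht'⟩ := hker1 v₀ hcastv₀
  have hD : E12 u₀ * E21 (-v₀) * E12 u₀ * (E12 1 * E21 (-1) * E12 1)⁻¹ ∈ H := by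
    have e1 : E12 u₀ = E12 1 * E12 ((l : ZMod n) * t) := by rw [E12_mul, ← ht]
    have e2 : E21 (-v₀) = E21 (-1) * E21 (-((l : ZMod n) * t')) := by
      rw [E21_mul, ht']
      congr 1
      ring
    rw [e1, e2]
    have heq : E12 1 * E12 ((l : ZMod n) * t) * (E21 (-1) * E21 (-((l : ZMod n) * t'))) *
          (E12 1 * E12 ((l : ZMod n) * t)) * (E12 1 * E21 (-1) * E12 1)⁻¹ =
        (E12 1 * E12 ((l : ZMod n) * t) * (E12 1)⁻¹) *
          ((E12 1 * E21 (-1)) * E21 (-((l : ZMod n) * t')) * (E12 1 * E21 (-1))⁻¹) *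
          ((E12 1 * E21 (-1) * E12 1) * E12 ((l : ZMod n) * t) * (E12 1 * E21 (-1) * E12 1)⁻¹) := by
      group
    rw [heq]
    refine mul_mem (mul_mem ?_ ?_) ?_
    · have := hconjE12 ModularGroup.T t
      rwa [redMap_T] at this
    · have := hconjE21 (ModularGroup.T * lowerT) (-t')
      rw [map_mul, redMap_T, redMap_lowerT,
        show ((l : ZMod n) * (-t')) = -((l : ZMod n) * t') by ring] at this
      exact this
    · have := hconjE12 (ModularGroup.T * lowerT * ModularGroup.T) t
      rwa [map_mul, map_mul, redMap_T, redMap_lowerT] at this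
  -- assemble
  have hgeq : g = (E21 x)⁻¹ *
      (E12 u₀ * E21 (-v₀) * E12 u₀ * (E12 1 * E21 (-1) * E12 1)⁻¹) *
      (E12 y)⁻¹ * (E21 w)⁻¹ := by
    rw [← hkey]
    group
  rw [hgeq]
  refine mul_mem (mul_mem (mul_mem (inv_mem ?_) hD) (inv_mem ?_)) (inv_mem ?_)
  · have hx2 : x = (l : ZMod n) * (-(ch + d * s) * v₀) := by
      rw [hx, hch, hwdef]
      ring
    rw [hx2]
    exact hE21mem _
  · have hy2 : y = (l : ZMod n) * (-(v₀ * bh)) := by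
      rw [hy, hbh]
      ring
    rw [hy2]
    exact hE12mem _
  · exact hE21mem s

lemma relindex_sup_formula (Γ N : Subgroup SL2Z) [N.Normal] [N.FiniteIndex] :
    Γ.relIndex N * (Γ ⊔ N).index = Γ.index := by
  have h1 : Γ.relIndex N * N.index = (Γ ⊓ N).index := by
    rw [← Subgroup.inf_relIndex_right]
    exact Subgroup.relIndex_mul_index inf_le_right
  have h2 : (Γ ⊓ N).index = N.relIndex Γ * Γ.index := by
    rw [← Subgroup.inf_relIndex_left]
    exact (Subgroup.relIndex_mul_index inf_le_left).symm
  have h3 : N.index = N.relIndex Γ * (Γ ⊔ N).index := by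
    rw [← Subgroup.relIndex_sup_right]
    exact (Subgroup.relIndex_mul_index le_sup_right).symm
  have h4 : Γ.relIndex N * (N.relIndex Γ * (Γ ⊔ N).index) = N.relIndex Γ * Γ.index := by
    rw [← h3, h1, h2]
  have hr : N.relIndex Γ ≠ 0 := Subgroup.FiniteIndex.index_ne_zero (H := N.subgroupOf Γ)
  have h5 : N.relIndex Γ * (Γ.relIndex N * (Γ ⊔ N).index) = N.relIndex Γ * Γ.index := by
    rw [← h4]; ring
  exact Nat.eq_of_mul_eq_mul_left (Nat.pos_of_ne_zero hr) h5

theorem levelIndex_deficiency_stable (Γ : Subgroup SL2Z) (hΓ : Γ.FiniteIndex)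
    (l : ℕ) (hl : l = wohlfahrtLevel Γ) (m : ℕ) (hm : 0 < m) :
    (Γ.map (redMap (l * m))).index = (Γ.map (redMap l)).index ∧
    Γ.relIndex (redMap (l * m)).ker = Γ.relIndex (redMap l).ker := by
  haveI := hΓ
  -- The defining property of the Wohlfahrt level.
  have hSne : {k : ℕ | 0 < k ∧ ∀ A : SL2Z, A * ModularGroup.T ^ k * A⁻¹ ∈ Γ}.Nonempty := by
    refine ⟨Γ.normalCore.index, Nat.pos_of_ne_zero
      (Subgroup.FiniteIndex.index_ne_zero (H := Γ.normalCore)), fun A => ?_⟩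
    have h1 : ModularGroup.T ^ Γ.normalCore.index ∈ Γ.normalCore :=
      Subgroup.pow_index_mem _ _
    exact Γ.normalCore_le (Subgroup.Normal.conj_mem inferInstance _ h1 A)
  have hmem : l ∈ {k : ℕ | 0 < k ∧ ∀ A : SL2Z, A * ModularGroup.T ^ k * A⁻¹ ∈ Γ} := by
    rw [hl]
    exact Nat.sInf_mem hSne
  obtain ⟨hlpos, hT⟩ := hmem
  haveI : NeZero l := ⟨hlpos.ne'⟩
  haveI : NeZero (l * m) := ⟨Nat.mul_ne_zero hlpos.ne' hm.ne'⟩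
  have hdvd : l ∣ l * m := ⟨m, rfl⟩
  set Pi := Matrix.SpecialLinearGroup.map (n := Fin 2) (ZMod.castHom hdvd (ZMod l)) with hPi
  have hcomp : Pi.comp (redMap (l * m)) = redMap l := by
    apply MonoidHom.ext
    intro γ
    apply Matrix.SpecialLinearGroup.ext
    intro i j
    show (ZMod.castHom hdvd (ZMod l)) (((γ i j : ℤ) : ZMod (l * m))) = ((γ i j : ℤ) : ZMod l)
    rw [map_intCast]
  have hker_le : Pi.ker ≤ Γ.map (redMap (l * m)) := ker_le_map Γ l m hlpos hm hT
  have hsurjP : Function.Surjective Pi := by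
    intro z
    obtain ⟨γ, hγ⟩ := redMap_surjective l z
    exact ⟨redMap (l * m) γ, by rw [← hcomp] at hγ; exact hγ⟩
  have he : (Γ.map (redMap (l * m))).index = (Γ.map (redMap l)).index := by
    rw [← hcomp, ← Subgroup.map_map]
    exact (Subgroup.index_map_eq _ hsurjP hker_le).symm
  refine ⟨he, ?_⟩
  -- deficiency part
  set KN := (redMap (l * m)).ker with hGN
  set KLo := (redMap l).ker with hGL
  have hGNL : KN ≤ KLo := by
    intro x hx
    have hx1 : redMap (l * m) x = 1 := hx
    show redMap l x = 1
    rw [← hcomp]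
    show Pi (redMap (l * m) x) = 1
    rw [hx1, map_one]
  have hsup : Γ ⊔ KN = Γ ⊔ KLo := by
    apply le_antisymm
    · exact sup_le le_sup_left (le_trans hGNL le_sup_right)
    · refine sup_le le_sup_left ?_
      intro γ hγ
      have h1 : redMap (l * m) γ ∈ Pi.ker := by
        show Pi (redMap (l * m) γ) = 1
        have h2 : Pi (redMap (l * m) γ) = redMap l γ := by rw [← hcomp]; rfl
        rw [h2]
        exact hγ
      obtain ⟨δ, hδΓ, hδ⟩ := hker_le h1
      have hmem2 : δ⁻¹ * γ ∈ KN := by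
        show redMap (l * m) (δ⁻¹ * γ) = 1
        rw [map_mul, map_inv, hδ]
        group
      have h3 : γ = δ * (δ⁻¹ * γ) := by group
      rw [h3]
      exact Subgroup.mul_mem _ (Subgroup.mem_sup_left hδΓ) (Subgroup.mem_sup_right hmem2)
  haveI : KN.Normal := MonoidHom.normal_ker _
  haveI : KLo.Normal := MonoidHom.normal_ker _
  haveI : KN.FiniteIndex := Subgroup.finiteIndex_ker _
  haveI : KLo.FiniteIndex := Subgroup.finiteIndex_ker _
  have hfn := relindex_sup_formula Γ KN
  have hfl := relindex_sup_formula Γ KLo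
  rw [hsup] at hfn
  have hE : (Γ ⊔ KLo).index ≠ 0 :=
    (Subgroup.finiteIndex_of_le le_sup_left).index_ne_zero
  exact Nat.eq_of_mul_eq_mul_right (Nat.pos_of_ne_zero hE) (hfn.trans hfl.symm)
end

section
/- Let Γ be a finite-index subgroup of SL(2,ℤ) with Wohlfahrt level l. Then Γ is a congruence subgroup if and only if Γ(l) ⊆ Γ, equivalently if and only if the deficiency f_{Γ,l} = [Γ(l) : Γ(l) ∩ Γ] equals 1. -/
open Matrix MatrixGroups

lemma castZMod_eq_iff (n : ℕ) (x y : ℤ) : ((x : ZMod n) = (y : ZMod n)) ↔ (n:ℤ) ∣ x - y := by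
  rw [ZMod.intCast_eq_intCast_iff, Int.modEq_iff_dvd]
  exact dvd_sub_comm

lemma redMap_entry (n : ℕ) (A : SL2Z) (i j : Fin 2) :
    ((redMap n A) : Matrix (Fin 2) (Fin 2) (ZMod n)) i j
      = (((A : Matrix (Fin 2) (Fin 2) ℤ) i j : ℤ) : ZMod n) := rfl

lemma mem_ker_redMap_iff (n : ℕ) (A : SL2Z) :
    A ∈ (redMap n).ker ↔
      ((n:ℤ) ∣ ((A : Matrix (Fin 2) (Fin 2) ℤ) 0 0 - 1) ∧
       (n:ℤ) ∣ (A : Matrix (Fin 2) (Fin 2) ℤ) 0 1 ∧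
       (n:ℤ) ∣ (A : Matrix (Fin 2) (Fin 2) ℤ) 1 0 ∧
       (n:ℤ) ∣ ((A : Matrix (Fin 2) (Fin 2) ℤ) 1 1 - 1)) := by
  rw [MonoidHom.mem_ker, Matrix.SpecialLinearGroup.ext_iff]
  constructor
  · intro h
    have h00 := h 0 0; have h01 := h 0 1; have h10 := h 1 0; have h11 := h 1 1
    rw [redMap_entry] at h00 h01 h10 h11
    simp only [Matrix.SpecialLinearGroup.coe_one, Matrix.one_apply_eq,
      Matrix.one_apply_ne (by decide : (0:Fin 2) ≠ 1),
      Matrix.one_apply_ne (by decide : (1:Fin 2) ≠ 0)] at h00 h01 h10 h11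
    refine ⟨?_, ?_, ?_, ?_⟩
    · exact (castZMod_eq_iff n _ 1).mp (by rw [h00]; simp)
    · simpa using (castZMod_eq_iff n _ 0).mp (by rw [h01]; simp)
    · simpa using (castZMod_eq_iff n _ 0).mp (by rw [h10]; simp)
    · exact (castZMod_eq_iff n _ 1).mp (by rw [h11]; simp)
  · rintro ⟨h1, h2, h3, h4⟩ i j
    fin_cases i <;> fin_cases j <;>
      simp only [Fin.zero_eta, Fin.mk_one, Fin.isValue] <;>
      rw [redMap_entry] <;>
      simp only [Matrix.SpecialLinearGroup.coe_one, Matrix.one_apply_eq,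
        Matrix.one_apply_ne (by decide : (0:Fin 2) ≠ 1),
        Matrix.one_apply_ne (by decide : (1:Fin 2) ≠ 0)]
    · rw [show (1 : ZMod n) = ((1:ℤ) : ZMod n) by simp, castZMod_eq_iff]; exact h1
    · rw [show (0 : ZMod n) = ((0:ℤ) : ZMod n) by simp, castZMod_eq_iff]; simpa using h2
    · rw [show (0 : ZMod n) = ((0:ℤ) : ZMod n) by simp, castZMod_eq_iff]; simpa using h3
    · rw [show (1 : ZMod n) = ((1:ℤ) : ZMod n) by simp, castZMod_eq_iff]; exact h4

lemma exists_isCoprime_shift (a b : ℤ) {n : ℕ} (hn : n ≠ 0) (h : IsCoprime a b) :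
    ∃ k : ℤ, IsCoprime (a + b * k) (n : ℤ) := by
  refine ⟨(↑(∏ p ∈ n.primeFactors.filter (fun p : ℕ => ¬ ((p:ℤ) ∣ a)), p) : ℤ), ?_⟩
  set k : ℤ := (↑(∏ p ∈ n.primeFactors.filter (fun p : ℕ => ¬ ((p:ℤ) ∣ a)), p) : ℤ) with hk
  rw [Int.isCoprime_iff_gcd_eq_one]
  by_contra hg
  obtain ⟨q, hq, hqd⟩ := Nat.exists_prime_and_dvd hg
  have hqint : Prime (q : ℤ) := Nat.prime_iff_prime_int.mp hq
  have hq1 : (q:ℤ) ∣ a + b * k := (Int.natCast_dvd_natCast.mpr hqd).trans (Int.gcd_dvd_left _ _)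
  have hqn : q ∣ n := Int.natCast_dvd_natCast.mp ((Int.natCast_dvd_natCast.mpr hqd).trans (Int.gcd_dvd_right _ _))
  by_cases hqa : (q:ℤ) ∣ a
  · have hbk : (q:ℤ) ∣ b * k := by
      have := dvd_sub hq1 hqa; simpa using this
    rcases hqint.dvd_mul.mp hbk with hqb | hqk
    · exact hqint.not_unit (h.isUnit_of_dvd' hqa hqb)
    · have : ∃ p ∈ n.primeFactors.filter (fun p : ℕ => ¬ ((p:ℤ) ∣ a)), (q:ℤ) ∣ (p:ℕ) := by
        have : (q:ℤ) ∣ ∏ p ∈ n.primeFactors.filter (fun p : ℕ => ¬ ((p:ℤ) ∣ a)), (p:ℤ) := by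
          rw [hk] at hqk; push_cast at hqk; exact hqk
        exact (Prime.dvd_finset_prod_iff hqint _).mp this
      obtain ⟨p, hpmem, hqp⟩ := this
      obtain ⟨⟨hp, -, -⟩, hpa⟩ := by
        simpa only [Finset.mem_filter, Nat.mem_primeFactors] using hpmem
      have : q = p := (Nat.prime_dvd_prime_iff_eq hq hp).mp (Int.natCast_dvd_natCast.mp hqp)
      exact hpa (this ▸ hqa)
  · have hqmem : q ∈ n.primeFactors.filter (fun p : ℕ => ¬ ((p:ℤ) ∣ a)) := by
      simp only [Finset.mem_filter, Nat.mem_primeFactors]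
      exact ⟨⟨hq, hqn, hn⟩, hqa⟩
    have hqk : (q:ℤ) ∣ k := by
      rw [hk]
      exact_mod_cast Int.natCast_dvd_natCast.mpr (Finset.dvd_prod_of_mem _ hqmem)
    exact hqa (by have : (q:ℤ) ∣ b * k := Dvd.dvd.mul_left hqk b
                  have := dvd_sub hq1 this; simpa using this)

open ModularGroup in
lemma key_step (Γ : Subgroup SL2Z) {l n : ℕ} (hl0 : 0 < l) (hn0 : 0 < n)
    (hln : l ∣ n)
    (hconj : ∀ g : SL2Z, g * ModularGroup.T ^ l * g⁻¹ ∈ Γ)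
    (hker : (redMap n).ker ≤ Γ) :
    (redMap l).ker ≤ Γ := by
  have hE : ∀ (g : SL2Z) (x : ℤ), (l:ℤ) ∣ x → g * T ^ x * g⁻¹ ∈ Γ := by
    rintro g x ⟨k, rfl⟩
    have h1 : T ^ ((l:ℤ) * k) = (T ^ l) ^ k := by rw [_root_.zpow_mul, zpow_natCast]
    rw [h1, ← conj_zpow]
    exact Subgroup.zpow_mem Γ (hconj g) k
  have hEmem : ∀ x : ℤ, (l:ℤ) ∣ x → T ^ x ∈ Γ := fun x hx => by simpa using hE 1 x hx
  have hFdet : ∀ x : ℤ, Matrix.det !![(1:ℤ),0;x,1] = 1 := by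
    intro x; simp [Matrix.det_fin_two_of]
  let F : ℤ → SL2Z := fun x => ⟨!![1,0;x,1], hFdet x⟩
  have hFcoe : ∀ x : ℤ, (F x : Matrix (Fin 2) (Fin 2) ℤ) = !![1,0;x,1] := fun x => rfl
  have hFS : ∀ x : ℤ, F x = S * T ^ (-x) * S⁻¹ := by
    intro x
    rw [eq_mul_inv_iff_mul_eq]
    apply Subtype.ext
    rw [Matrix.SpecialLinearGroup.coe_mul, Matrix.SpecialLinearGroup.coe_mul, hFcoe, coe_S,
      coe_T_zpow, Matrix.mul_fin_two, Matrix.mul_fin_two]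
    congrm !![?_, ?_; ?_, ?_] <;> ring
  have hFinv : ∀ x : ℤ, (F x)⁻¹ = F (-x) := by
    intro x
    apply inv_eq_of_mul_eq_one_right
    apply Subtype.ext
    rw [Matrix.SpecialLinearGroup.coe_mul, hFcoe, hFcoe, Matrix.mul_fin_two,
      Matrix.SpecialLinearGroup.coe_one, Matrix.one_fin_two]
    congrm !![?_, ?_; ?_, ?_] <;> ring
  have hFmem : ∀ x : ℤ, (l:ℤ) ∣ x → F x ∈ Γ := by
    intro x hx
    rw [hFS]
    exact hE S (-x) (dvd_neg.mpr hx)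
  intro A hA
  rw [mem_ker_redMap_iff] at hA
  obtain ⟨a, b, c, d, hM⟩ : ∃ a b c d : ℤ, (A : Matrix (Fin 2) (Fin 2) ℤ) = !![a,b;c,d] :=
    ⟨_, _, _, _, Matrix.eta_fin_two _⟩
  rw [hM] at hA
  obtain ⟨ha, hb, hc, hd⟩ := hA
  have ha : (l:ℤ) ∣ a - 1 := by simpa using ha
  have hb : (l:ℤ) ∣ b := by simpa using hb
  have hc : (l:ℤ) ∣ c := by simpa using hc
  have hd : (l:ℤ) ∣ d - 1 := by simpa using hd
  have hdet : a * d - b * c = 1 := by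
    have h := A.property
    rw [hM] at h
    rw [Matrix.det_fin_two_of] at h
    exact h
  obtain ⟨mq, hmq⟩ : (l:ℤ) ∣ (n:ℤ) := Int.natCast_dvd_natCast.mpr hln
  obtain ⟨t, ht⟩ := ha
  have hcop_ac : IsCoprime a c := ⟨d, -b, by linear_combination hdet⟩
  have hcop_al : IsCoprime a ((l:ℤ)) := ⟨1, -t, by linear_combination ht⟩
  have hcop : IsCoprime a ((l:ℤ) * c) := hcop_al.mul_right hcop_ac
  obtain ⟨k₁, hk₁⟩ := exists_isCoprime_shift a ((l:ℤ) * c) hn0.ne' hcop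
  obtain ⟨a₁, ha₁⟩ : ∃ x : ℤ, x = a + (l:ℤ) * c * k₁ := ⟨_, rfl⟩
  obtain ⟨b₁, hb₁⟩ : ∃ x : ℤ, x = b + (l:ℤ) * d * k₁ := ⟨_, rfl⟩
  rw [← ha₁] at hk₁
  have hk₁' := hk₁
  have hcop_m : IsCoprime a₁ mq := hk₁.of_isCoprime_of_dvd_right ⟨(l:ℤ), by rw [hmq]; ring⟩
  obtain ⟨u, v, huv⟩ := hcop_m
  obtain ⟨c₀, hc₀⟩ := hc
  obtain ⟨k₂, hk₂⟩ : ∃ x : ℤ, x = -(c₀ * u) := ⟨_, rfl⟩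
  obtain ⟨c₂, hc₂⟩ : ∃ x : ℤ, x = c + (l:ℤ) * a₁ * k₂ := ⟨_, rfl⟩
  obtain ⟨d₂, hd₂⟩ : ∃ x : ℤ, x = d + (l:ℤ) * b₁ * k₂ := ⟨_, rfl⟩
  have hNc₂ : (n:ℤ) ∣ c₂ :=
    ⟨c₀ * v, by linear_combination hc₂ + hc₀ + ((l:ℤ)*a₁)*hk₂ - (c₀*v)*hmq - ((l:ℤ)*c₀)*huv⟩
  obtain ⟨bq, hbq⟩ := hb
  obtain ⟨b₀, hb₀⟩ : ∃ x : ℤ, b₁ = (l:ℤ) * x := ⟨bq + d * k₁, by linear_combination hb₁ + hbq⟩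
  obtain ⟨k₃, hk₃⟩ : ∃ x : ℤ, x = -(b₀ * u) := ⟨_, rfl⟩
  obtain ⟨b₃, hb₃⟩ : ∃ x : ℤ, x = b₁ + (l:ℤ) * a₁ * k₃ := ⟨_, rfl⟩
  obtain ⟨d₃, hd₃⟩ : ∃ x : ℤ, x = d₂ + (l:ℤ) * c₂ * k₃ := ⟨_, rfl⟩
  have hNb₃ : (n:ℤ) ∣ b₃ :=
    ⟨b₀ * v, by linear_combination hb₃ + hb₀ + ((l:ℤ)*a₁)*hk₃ - (b₀*v)*hmq - ((l:ℤ)*b₀)*huv⟩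
  set X : SL2Z := F ((l:ℤ) * k₂) * (T ^ ((l:ℤ) * k₁) * A) * T ^ ((l:ℤ) * k₃) with hX
  have hXcoe : (X : Matrix (Fin 2) (Fin 2) ℤ) = !![a₁, b₃; c₂, d₃] := by
    rw [hX, Matrix.SpecialLinearGroup.coe_mul, Matrix.SpecialLinearGroup.coe_mul,
      Matrix.SpecialLinearGroup.coe_mul, hFcoe, coe_T_zpow, coe_T_zpow, hM,
      Matrix.mul_fin_two, Matrix.mul_fin_two, Matrix.mul_fin_two]
    rw [hb₃, hd₃, hc₂, hd₂, hb₁, ha₁]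
    congrm !![?_, ?_; ?_, ?_] <;> ring
  have hdet₃ : a₁ * d₃ - b₃ * c₂ = 1 := by
    have h := X.property
    rw [hXcoe] at h
    rw [Matrix.det_fin_two_of] at h
    exact h
  obtain ⟨s, hs⟩ : ∃ x : ℤ, a₁ - 1 = (l:ℤ) * x :=
    ⟨t + (l:ℤ) * c₀ * k₁, by linear_combination ha₁ + ht + (l:ℤ)*k₁*hc₀⟩
  obtain ⟨u', v', hu'⟩ := hk₁
  obtain ⟨σ, hσ⟩ : ∃ x : ℤ, x = -(s * u') := ⟨_, rfl⟩
  obtain ⟨τ, hτ⟩ : ∃ x : ℤ, x = σ ^ 2 * a₁ := ⟨_, rfl⟩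
  have key1 : a₁ * (1 + (l:ℤ)*σ) - 1 = (n:ℤ) * ((l:ℤ)*s*v') := by
    linear_combination hs + ((l:ℤ)*a₁)*hσ - ((l:ℤ)*s)*hu'
  have hcop1σ : IsCoprime (1 + (l:ℤ)*σ) ((n:ℤ)) :=
    ⟨a₁, -((l:ℤ)*s*v'), by linear_combination key1⟩
  have hNad : (n:ℤ) ∣ a₁ * d₃ - 1 := by
    obtain ⟨β, hβ⟩ := hNb₃
    exact ⟨β * c₂, by linear_combination hdet₃ + c₂ * hβ⟩
  have hg22 : (n:ℤ) ∣ d₃ - (1 + (l:ℤ)*σ) := by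
    have h2 : (n:ℤ) ∣ a₁ * (d₃ - (1 + (l:ℤ)*σ)) := by
      obtain ⟨w, hw⟩ := hNad
      exact ⟨w - (l:ℤ)*s*v', by linear_combination hw - key1⟩
    exact hk₁'.symm.dvd_of_dvd_mul_left h2
  have hg12 : (n:ℤ) ∣ (l:ℤ)*(1 - a₁ - (l:ℤ)*a₁*σ) := by
    refine ⟨-((l:ℤ)^2*s*v'), ?_⟩
    linear_combination (-(l:ℤ))*hs - (l:ℤ)^2*a₁*hσ + (l:ℤ)^2*s*hu'
  have hg21 : (n:ℤ) ∣ (-((l:ℤ)*σ^2) + (1 + (l:ℤ)*σ)*((l:ℤ)*τ)) := by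
    refine ⟨(l:ℤ)^2*σ^2*s*v', ?_⟩
    linear_combination ((l:ℤ)*(1+(l:ℤ)*σ))*hτ + ((l:ℤ)*σ^2)*key1
  have hg11P : (n:ℤ) ∣ (1 - (l:ℤ)*σ + (l:ℤ)^2*a₁*σ^2) - a₁ := by
    have h4 : (n:ℤ) ∣ (1 + (l:ℤ)*σ) * ((1 - (l:ℤ)*σ + (l:ℤ)^2*a₁*σ^2) - a₁) :=
      ⟨(l:ℤ)^3*σ^2*s*v' - (l:ℤ)*s*v', by linear_combination ((l:ℤ)^2*σ^2 - 1)*key1⟩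
    exact hcop1σ.symm.dvd_of_dvd_mul_left h4
  have hg11 : (n:ℤ) ∣ a₁ -
      ((1 - (l:ℤ)*σ + (l:ℤ)^2*a₁*σ^2) + ((l:ℤ)*τ)*((l:ℤ)*(1 - a₁ - (l:ℤ)*a₁*σ))) := by
    obtain ⟨w1, hw1⟩ := hg11P
    obtain ⟨w2, hw2⟩ := hg12
    exact ⟨-w1 - (l:ℤ)*τ*w2, by linear_combination -hw1 - (l:ℤ)*τ*hw2⟩
  set Gm : SL2Z := T ^ (-((l:ℤ)*a₁)) * (F σ * T ^ ((l:ℤ)) * (F σ)⁻¹) * F ((l:ℤ)*τ) with hGm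
  have hGmem : Gm ∈ Γ := by
    rw [hGm]
    exact mul_mem (mul_mem (hEmem _ ⟨-a₁, by ring⟩) (hE (F σ) _ dvd_rfl)) (hFmem _ ⟨τ, rfl⟩)
  have hGcoe : (Gm : Matrix (Fin 2) (Fin 2) ℤ) =
      !![(1 - (l:ℤ)*σ + (l:ℤ)^2*a₁*σ^2) + ((l:ℤ)*τ)*((l:ℤ)*(1 - a₁ - (l:ℤ)*a₁*σ)),
         (l:ℤ)*(1 - a₁ - (l:ℤ)*a₁*σ);
         -((l:ℤ)*σ^2) + (1 + (l:ℤ)*σ)*((l:ℤ)*τ),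
         1 + (l:ℤ)*σ] := by
    rw [hGm, hFinv, Matrix.SpecialLinearGroup.coe_mul, Matrix.SpecialLinearGroup.coe_mul,
      Matrix.SpecialLinearGroup.coe_mul, Matrix.SpecialLinearGroup.coe_mul, hFcoe, hFcoe, hFcoe,
      coe_T_zpow, coe_T_zpow,
      Matrix.mul_fin_two, Matrix.mul_fin_two, Matrix.mul_fin_two, Matrix.mul_fin_two]
    congrm !![?_, ?_; ?_, ?_] <;> ring
  have hred : redMap n X = redMap n Gm := by
    apply Subtype.ext
    apply Matrix.ext
    intro i j
    rw [redMap_entry, redMap_entry, hXcoe, hGcoe]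
    fin_cases i <;> fin_cases j <;> apply (castZMod_eq_iff n _ _).mpr
    · simpa using hg11
    · simpa using (dvd_sub hNb₃ hg12)
    · simpa using (dvd_sub hNc₂ hg21)
    · simpa using hg22
  have hXmem : X ∈ Γ := by
    have hker' : X * Gm⁻¹ ∈ (redMap n).ker := by
      rw [MonoidHom.mem_ker, _root_.map_mul, map_inv, hred]
      simp
    have hX2 : X = X * Gm⁻¹ * Gm := by group
    rw [hX2]
    exact mul_mem (hker hker') hGmem
  have hAele : A = (T ^ ((l:ℤ) * k₁))⁻¹ * ((F ((l:ℤ) * k₂))⁻¹ * X * (T ^ ((l:ℤ) * k₃))⁻¹) := by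
    rw [hX]; group
  rw [hAele]
  exact mul_mem (inv_mem (hEmem _ ⟨k₁, rfl⟩))
    (mul_mem (mul_mem (inv_mem (hFmem _ ⟨k₂, rfl⟩)) hXmem) (inv_mem (hEmem _ ⟨k₃, rfl⟩)))

theorem congruence_iff_deficiency_one (Γ : Subgroup SL2Z) (hΓ : Γ.FiniteIndex)
    (l : ℕ) (hl : l = wohlfahrtLevel Γ) :
    ((∃ n : ℕ, 0 < n ∧ (redMap n).ker ≤ Γ) ↔ (redMap l).ker ≤ Γ) ∧
    ((redMap l).ker ≤ Γ ↔ Γ.relIndex (redMap l).ker = 1) := by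
  haveI := hΓ
  have hne : (Γ.normalCore.index) ∈
      {k : ℕ | 0 < k ∧ ∀ A : SL2Z, A * ModularGroup.T ^ k * A⁻¹ ∈ Γ} := by
    constructor
    · exact Nat.pos_of_ne_zero Subgroup.FiniteIndex.index_ne_zero
    · intro A
      exact Γ.normalCore_le
        ((Subgroup.normalCore_normal Γ).conj_mem _ (Subgroup.pow_index_mem _ ModularGroup.T) A)
  have hlmem : l ∈ {k : ℕ | 0 < k ∧ ∀ A : SL2Z, A * ModularGroup.T ^ k * A⁻¹ ∈ Γ} := by
    rw [hl]; exact Nat.sInf_mem ⟨_, hne⟩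
  obtain ⟨hl0, hconj⟩ := hlmem
  constructor
  · constructor
    · rintro ⟨n, hn0, hker⟩
      -- T ^ n lies in the kernel mod n, so every conjugate of T^n lies in Γ
      have hTn : ModularGroup.T ^ n ∈ (redMap n).ker := by
        rw [show (ModularGroup.T ^ n : SL2Z) = ModularGroup.T ^ ((n : ℤ)) from (zpow_natCast _ n).symm]
        rw [mem_ker_redMap_iff]
        rw [ModularGroup.coe_T_zpow]
        refine ⟨by simp, by simp, by simp, by simp⟩
      have hnmem : n ∈ {k : ℕ | 0 < k ∧ ∀ A : SL2Z, A * ModularGroup.T ^ k * A⁻¹ ∈ Γ} := by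
        refine ⟨hn0, fun A => hker ?_⟩
        exact (MonoidHom.normal_ker _).conj_mem _ hTn A
      have hln : l ∣ n := by
        by_contra hnd
        have hr0 : 0 < n % l := Nat.pos_of_ne_zero fun h => hnd (Nat.dvd_of_mod_eq_zero h)
        have hrl : n % l < l := Nat.mod_lt _ hl0
        have hrmem : n % l ∈ {k : ℕ | 0 < k ∧ ∀ A : SL2Z, A * ModularGroup.T ^ k * A⁻¹ ∈ Γ} := by
          refine ⟨hr0, fun A => ?_⟩
          have e : A * ModularGroup.T ^ (n % l) * A⁻¹ =
              (A * (ModularGroup.T ^ l) ^ (n / l) * A⁻¹)⁻¹ * (A * ModularGroup.T ^ n * A⁻¹) := by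
            have e2 : ModularGroup.T ^ n = (ModularGroup.T ^ l) ^ (n / l) * ModularGroup.T ^ (n % l) := by
              rw [← pow_mul, ← pow_add, Nat.div_add_mod]
            rw [e2]; group
          rw [e]
          refine mul_mem (inv_mem ?_) (hnmem.2 A)
          rw [← conj_pow]
          exact pow_mem (hconj A) _
        have hle : wohlfahrtLevel Γ ≤ n % l := Nat.sInf_le hrmem
        have hle' : l ≤ n % l := hl ▸ hle
        omega
      exact key_step Γ hl0 hn0 hln hconj hker
    · intro hker
      exact ⟨l, hl0, hker⟩
  · exact Subgroup.relIndex_eq_one.symm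
end
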